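/- Let (R, m) be a Noetherian local ring and M a finitely generated R-module of Krull dimension t = 1. Then f⁰_m(M) = e⁰_m(M) + ℓ_R(0 :_M m): if ℓ_R(M/m^{n+1}M) = P(n) for a degree-1 polynomial P and ℓ_R((m^{n+1}M :_M m)/m^{n+1}M) = c for all sufficiently large n, then c equals the leading coefficient of P plus ℓ_R(0 :_M m). -/

import Mathlib

open IsLocalRing Submodule

/-- The colon submodule `(N :_M J) = {x ∈ M ∣ J x ⊆ N}`. -/
def Submodule.colonBy {R M : Type*} [CommRing R] [AddCommGroup M] [Module R M]
    (N : Submodule R M) (J : Ideal R) : Submodule R M where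
  carrier := {x | ∀ r ∈ J, r • x ∈ N}
  add_mem' := fun {a b} ha hb r hr => by
    rw [smul_add]; exact N.add_mem (ha r hr) (hb r hr)
  zero_mem' := fun r hr => by rw [smul_zero]; exact N.zero_mem
  smul_mem' := fun c {x} hx r hr => by
    rw [smul_comm]; exact N.smul_mem c (hx r hr)

/-- The length of a module: the height of `⊤` in its lattice of submodules. -/
noncomputable def moduleLength (R M : Type*) [Ring R] [AddCommGroup M] [Module R M] : ℕ∞ :=
  Order.height (⊤ : Submodule R M)

open Order

section ElenTheory

variable {α β : Type*}

/-- Relative length of the interval `[a, b]`: sup of lengths of strict chains starting at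
or above `a` and ending at `b`. -/
noncomputable def elen [Preorder α] (a b : α) : ℕ∞ :=
  ⨆ (p : LTSeries α) (_ : a ≤ p.head ∧ p.last = b), (p.length : ℕ∞)

variable [PartialOrder α] [PartialOrder β]

lemma length_le_elen {a b : α} {p : LTSeries α} (h1 : a ≤ p.head) (h2 : p.last = b) :
    (p.length : ℕ∞) ≤ elen a b :=
  le_iSup₂ (f := fun (p : LTSeries α) (_ : a ≤ p.head ∧ p.last = b) => (p.length : ℕ∞)) p ⟨h1, h2⟩

lemma elen_le {a b : α} {n : ℕ∞}
    (h : ∀ p : LTSeries α, a ≤ p.head → p.last = b → (p.length : ℕ∞) ≤ n) :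
    elen a b ≤ n :=
  iSup₂_le fun p hp => h p hp.1 hp.2

lemma elen_self (a : α) : elen a a = 0 := by
  refine le_antisymm (elen_le fun p h1 h2 => ?_) zero_le
  by_contra hc
  have hlen : p.length ≠ 0 := by
    intro h0; exact hc (by simp [h0])
  have : p.head < p.last := by
    apply p.strictMono
    simp only [Fin.lt_def, Fin.val_zero, Fin.val_last]
    omega
  rw [h2] at this
  exact absurd (lt_of_le_of_lt h1 this) (lt_irrefl a)

lemma elen_nonempty {a b : α} (hab : a ≤ b) :
    ∃ p : LTSeries α, a ≤ p.head ∧ p.last = b :=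
  ⟨RelSeries.singleton _ b, by simpa using hab, rfl⟩

lemma elen_add_one_le {a b c : α} (hab : a ≤ b) (hbc : b < c) :
    elen a b + 1 ≤ elen a c := by
  rw [elen, ENat.biSup_add' (elen_nonempty hab)]
  refine iSup₂_le fun p ⟨h1, h2⟩ => ?_
  have hrel : p.last < c := h2 ▸ hbc
  have hh : a ≤ (p.snoc c hrel).head := by rwa [RelSeries.head_snoc]
  have hl : (p.snoc c hrel).last = c := RelSeries.last_snoc _ _ _
  have := length_le_elen hh hl
  rw [RelSeries.snoc_length] at this
  exact le_trans (by push_cast; exact le_rfl) this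

lemma elen_le_elen_right {a b c : α} (hab : a ≤ b) (hbc : b ≤ c) :
    elen a b ≤ elen a c := by
  rcases eq_or_lt_of_le hbc with rfl | hlt
  · exact le_rfl
  · exact le_trans le_self_add (elen_add_one_le hab hlt)

lemma elen_concat {a b c : α} (hab : a ≤ b) (hbc : b ≤ c) :
    elen a b + elen b c ≤ elen a c := by
  rw [elen, ENat.biSup_add' (elen_nonempty hab)]
  refine iSup₂_le fun p ⟨h1, h2⟩ => ?_
  rw [elen, ENat.add_biSup' (elen_nonempty hbc)]
  refine iSup₂_le fun q ⟨g1, g2⟩ => ?_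
  rcases eq_or_lt_of_le (h2 ▸ g1 : p.last ≤ q.head) with heq | hlt
  · have hh : a ≤ (p.smash q heq).head := by rwa [RelSeries.head_smash]
    have hl : (p.smash q heq).last = q.last := RelSeries.last_smash _
    have := length_le_elen hh (hl.trans g2)
    refine le_trans (le_of_eq ?_) this
    show ((p.length : ℕ∞) + q.length) = ((p.smash q heq).length : ℕ∞)
    show ((p.length : ℕ∞) + q.length) = ((p.length + q.length : ℕ) : ℕ∞)
    push_cast; rfl
  · have heq' : (p.snoc q.head hlt).last = q.head := RelSeries.last_snoc _ _ _
    set p' := (p.snoc q.head hlt).smash q heq' with hp'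
    have hh : a ≤ p'.head := by
      rw [hp', RelSeries.head_smash, RelSeries.head_snoc]; exact h1
    have hl : p'.last = q.last := RelSeries.last_smash _
    have := length_le_elen hh (hl.trans g2)
    refine le_trans ?_ this
    have hlen : p'.length = p.length + 1 + q.length := rfl
    rw [hlen]
    push_cast
    calc (p.length : ℕ∞) + q.length ≤ ((p.length : ℕ∞) + 1) + q.length := by
          gcongr; exact le_self_add
      _ = _ := by ring

end ElenTheory

section ElenModular

variable {α β : Type*} [Lattice α] [IsModularLattice α]

lemma elen_le_add {a b c : α} (hab : a ≤ b) (hbc : b ≤ c) :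
    elen a c ≤ elen a b + elen b c := by
  apply elen_le
  intro p h1 h2
  have key : ∀ n : ℕ, (hn : n ≤ p.length) →
      (n : ℕ∞) ≤ elen a (p ⟨n, by omega⟩ ⊓ b) + elen b (p ⟨n, by omega⟩ ⊔ b) := by
    intro n
    induction n with
    | zero => intro _; exact zero_le
    | succ n ih =>
      intro hn
      have hn' : n ≤ p.length := by omega
      have hlt : p ⟨n, by omega⟩ < p ⟨n + 1, by omega⟩ :=
        p.strictMono (by simp [Fin.lt_def])
      have hale : ∀ m (hm : m ≤ p.length), a ≤ p ⟨m, by omega⟩ ⊓ b := by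
        intro m hm
        refine le_inf (le_trans h1 ?_) hab
        exact p.monotone (by simp [Fin.le_def])
      have hpair := strictMono_inf_prod_sup (z := b) hlt
      rw [Prod.lt_iff] at hpair
      have hstep : elen a (p ⟨n, by omega⟩ ⊓ b) + elen b (p ⟨n, by omega⟩ ⊔ b) + 1 ≤
          elen a (p ⟨n+1, by omega⟩ ⊓ b) + elen b (p ⟨n+1, by omega⟩ ⊔ b) := by
        rcases hpair with ⟨h's, h'l⟩ | ⟨h'l, h's⟩
        · calc elen a (p ⟨n, _⟩ ⊓ b) + elen b (p ⟨n, _⟩ ⊔ b) + 1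
              = (elen a (p ⟨n, by omega⟩ ⊓ b) + 1) + elen b (p ⟨n, by omega⟩ ⊔ b) := by ring
            _ ≤ _ := by
                gcongr
                · exact elen_add_one_le (hale n hn') h's
                · exact elen_le_elen_right le_sup_right h'l
        · calc elen a (p ⟨n, _⟩ ⊓ b) + elen b (p ⟨n, _⟩ ⊔ b) + 1
              = elen a (p ⟨n, by omega⟩ ⊓ b) + (elen b (p ⟨n, by omega⟩ ⊔ b) + 1) := by ring
            _ ≤ _ := by
                gcongr
                · exact elen_le_elen_right (hale n hn') h'l
                · exact elen_add_one_le le_sup_right h's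
      calc ((n + 1 : ℕ) : ℕ∞) = (n : ℕ∞) + 1 := by push_cast; rfl
        _ ≤ elen a (p ⟨n, by omega⟩ ⊓ b) + elen b (p ⟨n, by omega⟩ ⊔ b) + 1 := by
            gcongr; exact ih hn'
        _ ≤ _ := hstep
  have := key p.length le_rfl
  have hlast : p ⟨p.length, by omega⟩ = c := by
    rw [← h2]; rfl
  rw [hlast] at this
  rwa [inf_eq_right.mpr hbc, sup_eq_left.mpr hbc] at this

lemma elen_add {a b c : α} (hab : a ≤ b) (hbc : b ≤ c) :
    elen a c = elen a b + elen b c :=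
  le_antisymm (elen_le_add hab hbc) (elen_concat hab hbc)

end ElenModular

section ElenTransport

variable {α β : Type*} [PartialOrder α] [PartialOrder β]

lemma elen_orderIso (f : α ≃o β) (a b : α) : elen (f a) (f b) = elen a b := by
  apply le_antisymm
  · apply elen_le
    intro p h1 h2
    have hh : a ≤ (p.map f.symm f.symm.strictMono).head := by
      rw [LTSeries.head_map]
      simpa using f.symm.monotone h1
    have hl : (p.map f.symm f.symm.strictMono).last = b := by
      rw [LTSeries.last_map, h2]; simp
    have := length_le_elen hh hl
    simpa using this
  · apply elen_le
    intro p h1 h2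
    have hh : f a ≤ (p.map f f.strictMono).head := by
      rw [LTSeries.head_map]; exact f.monotone h1
    have hl : (p.map f f.strictMono).last = f b := by
      rw [LTSeries.last_map, h2]
    have := length_le_elen hh hl
    simpa using this

lemma elen_subtype {Q : α → Prop} {a b : α} (ha : Q a) (hb : Q b)
    (hQ : ∀ x, a ≤ x → x ≤ b → Q x) :
    elen (⟨a, ha⟩ : Subtype Q) ⟨b, hb⟩ = elen a b := by
  apply le_antisymm
  · apply elen_le
    intro p h1 h2
    have := length_le_elen (p := p.map (Subtype.val) (fun x y h => h))
      (by exact h1) (by simp [h2, RelSeries.last]; exact congrArg Subtype.val h2)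
    exact this
  · apply elen_le
    intro p h1 h2
    have hmem : ∀ i : Fin (p.length + 1), Q (p i) := by
      intro i
      refine hQ _ (le_trans h1 (p.monotone (Fin.zero_le i))) ?_
      rw [← h2]
      exact p.monotone (Fin.le_last i)
    let q : LTSeries (Subtype Q) :=
      ⟨p.length, fun i => ⟨p i, hmem i⟩, fun i => p.step i⟩
    have := length_le_elen (p := q) (a := (⟨a, ha⟩ : Subtype Q)) (b := ⟨b, hb⟩)
      (by exact h1) (by exact Subtype.ext h2)
    simpa using this

end ElenTransport


section ModuleTransport

variable {R M : Type*} [Ring R] [AddCommGroup M] [Module R M]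

lemma moduleLength_eq_elen : moduleLength R M = elen (⊥ : Submodule R M) ⊤ := by
  rw [moduleLength, Order.height_eq_iSup_last_eq, elen]
  simp [bot_le]

lemma elen_diamond {α : Type*} [Lattice α] [IsModularLattice α] [OrderBot α] (x y : α) (h : x ⊓ y = ⊥) :
    elen (⊥ : α) x = elen y (x ⊔ y) := by
  have h1 : elen (⊥ : α) x = elen (x ⊓ y) x := by rw [h]
  have h2 : elen (x ⊓ y) x
      = elen (⟨x ⊓ y, by simp⟩ : Set.Icc (x ⊓ y) x) ⟨x, by simp⟩ := by
    rw [elen_subtype (Q := fun z => z ∈ Set.Icc (x ⊓ y) x) (by simp) (by simp)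
      (fun z hz1 hz2 => Set.mem_Icc.mpr ⟨hz1, hz2⟩)]
  have h3 := elen_orderIso (infIccOrderIsoIccSup x y)
    (⟨x ⊓ y, by simp⟩ : Set.Icc (x ⊓ y) x) ⟨x, by simp⟩
  have e1 : (infIccOrderIsoIccSup x y) ⟨x ⊓ y, by simp⟩
      = (⟨y, by simp⟩ : Set.Icc y (x ⊔ y)) := by
    apply Subtype.ext
    simp [infIccOrderIsoIccSup]
  have e2 : (infIccOrderIsoIccSup x y) ⟨x, by simp⟩
      = (⟨x ⊔ y, by simp⟩ : Set.Icc y (x ⊔ y)) := by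
    apply Subtype.ext
    simp [infIccOrderIsoIccSup]
  have h4 : elen (⟨y, by simp⟩ : Set.Icc y (x ⊔ y)) ⟨x ⊔ y, by simp⟩ = elen y (x ⊔ y) := by
    rw [elen_subtype (Q := fun z => z ∈ Set.Icc y (x ⊔ y)) (by simp) (by simp)
      (fun z hz1 hz2 => Set.mem_Icc.mpr ⟨hz1, hz2⟩)]
  rw [h1, h2, ← h3] at *
  rw [e1, e2] at h3 ⊢
  rw [h4]

lemma moduleLength_quotient (A : Submodule R M) :
    moduleLength R (M ⧸ A) = elen A (⊤ : Submodule R M) := by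
  rw [moduleLength_eq_elen]
  have h1 : elen (⊥ : Submodule R (M ⧸ A)) ⊤ = elen ((Submodule.comapMkQRelIso A) ⊥) ((Submodule.comapMkQRelIso A) ⊤) :=
    (elen_orderIso (Submodule.comapMkQRelIso A) ⊥ ⊤).symm
  have e1 : (Submodule.comapMkQRelIso A) ⊥ = ⟨A, (Set.mem_Ici.mpr le_rfl)⟩ := by
    apply Subtype.ext
    show Submodule.comap A.mkQ ⊥ = A
    rw [Submodule.comap_bot, Submodule.ker_mkQ]
  have e2 : (Submodule.comapMkQRelIso A) ⊤ = ⟨⊤, Set.mem_Ici.mpr le_top⟩ := by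
    apply Subtype.ext
    show Submodule.comap A.mkQ ⊤ = ⊤
    exact Submodule.comap_top _
  rw [h1, e1, e2, elen_subtype (Q := fun p' => p' ∈ Set.Ici A) (Set.mem_Ici.mpr le_rfl) (Set.mem_Ici.mpr le_top) (fun x hx _ => hx)]

lemma moduleLength_submodule (N : Submodule R M) :
    moduleLength R ↥N = elen (⊥ : Submodule R M) N := by
  rw [moduleLength_eq_elen]
  have h1 : elen (⊥ : Submodule R ↥N) ⊤
      = elen ((Submodule.MapSubtype.orderIso N) ⊥) ((Submodule.MapSubtype.orderIso N) ⊤) :=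
    (elen_orderIso (Submodule.MapSubtype.orderIso N) ⊥ ⊤).symm
  have e1 : (Submodule.MapSubtype.orderIso N) ⊥ = ⟨⊥, bot_le⟩ := by
    apply Subtype.ext
    show Submodule.map N.subtype ⊥ = ⊥
    exact Submodule.map_bot _
  have e2 : (Submodule.MapSubtype.orderIso N) ⊤ = ⟨N, le_rfl⟩ := by
    apply Subtype.ext
    show Submodule.map N.subtype ⊤ = N
    exact Submodule.map_subtype_top N
  rw [h1, e1, e2, elen_subtype (Q := fun p' => p' ≤ N) bot_le le_rfl (fun x _ hx => hx)]

lemma moduleLength_map_mkQ (A K : Submodule R M) (hAK : A ≤ K) :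
    moduleLength R ↥(Submodule.map A.mkQ K) = elen A K := by
  rw [moduleLength_submodule]
  have h1 : elen (⊥ : Submodule R (M ⧸ A)) (Submodule.map A.mkQ K)
      = elen ((Submodule.comapMkQRelIso A) ⊥) ((Submodule.comapMkQRelIso A) (Submodule.map A.mkQ K)) :=
    (elen_orderIso (Submodule.comapMkQRelIso A) ⊥ _).symm
  have e1 : (Submodule.comapMkQRelIso A) ⊥ = ⟨A, (Set.mem_Ici.mpr le_rfl)⟩ := by
    apply Subtype.ext
    show Submodule.comap A.mkQ ⊥ = A
    rw [Submodule.comap_bot, Submodule.ker_mkQ]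
  have e2 : (Submodule.comapMkQRelIso A) (Submodule.map A.mkQ K) = ⟨K, hAK⟩ := by
    apply Subtype.ext
    show Submodule.comap A.mkQ (Submodule.map A.mkQ K) = K
    rw [Submodule.comap_map_mkQ, sup_eq_right.mpr hAK]
  rw [h1, e1, e2, elen_subtype (Q := fun p' => p' ∈ Set.Ici A) (Set.mem_Ici.mpr le_rfl) hAK (fun x hx _ => hx)]

end ModuleTransport

section Algebra

variable {R M : Type*} [CommRing R]
  [AddCommGroup M] [Module R M] (I : Ideal R)

lemma mem_colonBy {N : Submodule R M} {J : Ideal R} {x : M} :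
    x ∈ N.colonBy J ↔ ∀ r ∈ J, r • x ∈ N := Iff.rfl

lemma colonBy_mono {N N' : Submodule R M} (h : N ≤ N') (J : Ideal R) :
    N.colonBy J ≤ N'.colonBy J :=
  fun _ hx r hr => h (hx r hr)

lemma smul_colonBy_le (N : Submodule R M) (J : Ideal R) : J • (N.colonBy J) ≤ N :=
  Submodule.smul_le.mpr fun r hr _ hx => hx r hr

lemma le_colonBy_of_smul_le {N' N : Submodule R M} {J : Ideal R} (h : J • N' ≤ N) :
    N' ≤ N.colonBy J :=
  fun x hx => mem_colonBy.mpr fun r hr => h (Submodule.smul_mem_smul hr hx)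

lemma smul_pow_top (n : ℕ) : I • (I ^ n • ⊤ : Submodule R M) = I ^ (n+1) • ⊤ := by
  rw [pow_succ', mul_smul]

lemma pow_top_le {m n : ℕ} (h : m ≤ n) : (I ^ n • ⊤ : Submodule R M) ≤ I ^ m • ⊤ :=
  Submodule.smul_mono_left (Ideal.pow_le_pow_right h)

lemma pow_succ_top_le_colon (n : ℕ) :
    (I ^ n • ⊤ : Submodule R M) ≤ (I ^ (n+1) • ⊤ : Submodule R M).colonBy I :=
  le_colonBy_of_smul_le (le_of_eq (smul_pow_top I n))

lemma colon_anti {m n : ℕ} (h : m ≤ n) :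
    ((I ^ (n+1) • ⊤ : Submodule R M).colonBy I) ≤ ((I ^ (m+1) • ⊤ : Submodule R M).colonBy I) :=
  colonBy_mono (pow_top_le I (by omega)) I

lemma socle_le_colon (N : Submodule R M) :
    ((⊥ : Submodule R M).colonBy I) ≤ N.colonBy I :=
  colonBy_mono bot_le I

lemma smul_socle (J : Ideal R) : J • ((⊥ : Submodule R M).colonBy J) = ⊥ :=
  le_bot_iff.mp (smul_colonBy_le ⊥ J)

end Algebra

section AlgebraU

universe u

variable {R M : Type u} [CommRing R] [IsNoetherianRing R]
  [AddCommGroup M] [Module R M] [Module.Finite R M] (I : Ideal R)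

/-- Eventually `𝔪ⁿM ∩ soc(M) = 0` (Artin-Rees), same-universe version. -/
lemma exists_pow_inf_socle_eq_bot_u :
    ∃ k, ∀ n ≥ k, (I ^ n • ⊤ : Submodule R M) ⊓ ((⊥ : Submodule R M).colonBy I) = ⊥ := by
  obtain ⟨k, hk⟩ := Ideal.exists_pow_inf_eq_pow_smul I ((⊥ : Submodule R M).colonBy I)
  refine ⟨k + 1, fun n hn => ?_⟩
  rw [hk n (by omega)]
  refine le_bot_iff.mp ?_
  calc I ^ (n - k) • ((I ^ k • ⊤ : Submodule R M) ⊓ (⊥ : Submodule R M).colonBy I)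
      ≤ I • ((⊥ : Submodule R M).colonBy I) :=
        Submodule.smul_mono (Ideal.pow_le_self (by omega)) inf_le_right
    _ = ⊥ := smul_socle I

/-- Uniform Artin-Rees bound for colon submodules, same-universe version. -/
lemma exists_colon_le_u :
    ∃ k, ∀ n ≥ k, ((I ^ (n+1) • ⊤ : Submodule R M).colonBy I)
      ≤ ((⊥ : Submodule R M).colonBy I) ⊔ (I ^ (n + 1 - k) • ⊤) := by
  classical
  obtain ⟨s, hs⟩ := (IsNoetherian.noetherian I : I.FG)
  set ι := {x // x ∈ s}
  let φ : M →ₗ[R] (ι → M) := LinearMap.pi (fun i => (i.1 : R) • LinearMap.id)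
  have hφ : ∀ (x : M) (i : ι), φ x i = (i.1 : R) • x := fun x i => rfl
  have hker : ∀ x : M, φ x = 0 → x ∈ ((⊥ : Submodule R M).colonBy I) := by
    intro x hx
    intro r hr
    rw [← hs] at hr
    induction hr using Submodule.span_induction with
    | mem g hg =>
      have := congrFun hx ⟨g, hg⟩
      rw [hφ] at this
      simpa using this
    | zero => simp
    | add a b _ _ ha hb =>
      rw [add_smul]
      simpa using add_mem ha hb
    | smul c a _ ha =>
      rw [smul_eq_mul, mul_smul]
      simpa using Submodule.smul_mem _ c ha
  obtain ⟨k, hk⟩ := Ideal.exists_pow_inf_eq_pow_smul I (LinearMap.range φ)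
  refine ⟨k, fun n hn => ?_⟩
  intro x hx
  have hφx : φ x ∈ (I ^ (n+1) • ⊤ : Submodule R (ι → M)) := by
    have : φ x = ∑ i : ι, Pi.single i (φ x i) := (Finset.univ_sum_single (φ x)).symm
    rw [this]
    refine Submodule.sum_mem _ fun i _ => ?_
    have hmem : φ x i ∈ (I ^ (n+1) • ⊤ : Submodule R M) := by
      rw [hφ]
      exact hx i.1 (hs ▸ Submodule.subset_span i.2)
    have hmm : (LinearMap.single R (fun _ => M) i) (φ x i) ∈
        Submodule.map (LinearMap.single R (fun _ => M) i) (I ^ (n+1) • ⊤ : Submodule R M) :=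
      Submodule.mem_map_of_mem hmem
    have heq : (LinearMap.single R (fun _ => M) i) (φ x i) = Pi.single i (φ x i) := rfl
    rw [heq, Submodule.map_smul''] at hmm
    exact Submodule.smul_mono le_rfl le_top hmm
  have hmem2 : φ x ∈ I ^ (n + 1 - k) • (I ^ k • ⊤ ⊓ LinearMap.range φ) := by
    rw [← hk (n+1) (by omega)]
    exact ⟨hφx, ⟨x, rfl⟩⟩
  have hmem3 : φ x ∈ Submodule.map φ (I ^ (n + 1 - k) • ⊤ : Submodule R M) := by
    rw [Submodule.map_smul'', Submodule.map_top]
    exact Submodule.smul_mono le_rfl inf_le_right hmem2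
  obtain ⟨y, hy, hxy⟩ := hmem3
  have hdiff : x - y ∈ ((⊥ : Submodule R M).colonBy I) := by
    apply hker
    rw [map_sub, hxy, sub_self]
  rw [Submodule.mem_sup]
  exact ⟨x - y, hdiff, y, hy, by abel⟩

/-- Eventual vanishing of the graded socle: stability of the colon filtration. -/
lemma exists_socle_vanish_u :
    ∃ n₀, ∀ i ≥ n₀, ((I ^ (i+2) • ⊤ : Submodule R M).colonBy I) ⊓ (I ^ i • ⊤)
      ≤ (I ^ (i+1) • ⊤ : Submodule R M) := by
  let Kf : I.Filtration M :=
    { N := fun i => (I ^ (i+2) • ⊤ : Submodule R M).colonBy I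
      mono := fun i => colonBy_mono (pow_top_le I (by omega)) I
      smul_le := fun i => by
        refine le_trans (smul_colonBy_le _ I) ?_
        exact le_colonBy_of_smul_le (le_of_eq (smul_pow_top I (i+2))) }
  have hstable : ((I.stableFiltration ⊤) ⊓ Kf).Stable :=
    Ideal.Filtration.Stable.inter_right (F' := Kf) (I.stableFiltration_stable ⊤)
  obtain ⟨n₀, hn₀⟩ := hstable
  refine ⟨n₀ + 1, fun i hi => ?_⟩
  have hstep := hn₀ (i - 1) (by omega)
  have hGi : ((I.stableFiltration ⊤) ⊓ Kf).N (i - 1 + 1)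
      = I • ((I.stableFiltration ⊤) ⊓ Kf).N (i - 1) := hstep.symm
  have hidx : i - 1 + 1 = i := by omega
  rw [hidx] at hGi
  have hN : ((I.stableFiltration ⊤) ⊓ Kf).N i
      = (I ^ i • ⊤ : Submodule R M) ⊓ ((I ^ (i+2) • ⊤ : Submodule R M).colonBy I) := rfl
  have hN' : ((I.stableFiltration ⊤) ⊓ Kf).N (i - 1)
      = (I ^ (i-1) • ⊤ : Submodule R M) ⊓ ((I ^ (i-1+2) • ⊤ : Submodule R M).colonBy I) := rfl
  rw [hN, hN'] at hGi
  rw [inf_comm]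
  rw [hGi]
  calc I • ((I ^ (i-1) • ⊤ : Submodule R M) ⊓ ((I ^ (i-1+2) • ⊤ : Submodule R M).colonBy I))
      ≤ I • ((I ^ (i-1+2) • ⊤ : Submodule R M).colonBy I) :=
        smul_mono_right _ inf_le_right
    _ ≤ (I ^ (i-1+2) • ⊤ : Submodule R M) := smul_colonBy_le _ I
    _ ≤ (I ^ (i+1) • ⊤ : Submodule R M) := pow_top_le I (by omega)

end AlgebraU

section Transport

variable {R M M' : Type*} [CommRing R]
  [AddCommGroup M] [Module R M] [AddCommGroup M'] [Module R M']

lemma mem_map_lequiv (e : M' ≃ₗ[R] M) {N : Submodule R M'} {x : M} :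
    x ∈ Submodule.map e.toLinearMap N ↔ e.symm x ∈ N := by
  constructor
  · rintro ⟨y, hy, rfl⟩; simpa using hy
  · intro h; exact ⟨e.symm x, h, by simp⟩

lemma map_lequiv_pow_top (e : M' ≃ₗ[R] M) (I : Ideal R) (k : ℕ) :
    Submodule.map e.toLinearMap (I ^ k • ⊤ : Submodule R M') = I ^ k • ⊤ := by
  rw [Submodule.map_smul'', Submodule.map_top, LinearEquiv.range]

lemma map_lequiv_colonBy (e : M' ≃ₗ[R] M) (N : Submodule R M') (J : Ideal R) :
    Submodule.map e.toLinearMap (N.colonBy J) = (Submodule.map e.toLinearMap N).colonBy J := by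
  ext x
  rw [mem_map_lequiv e, mem_colonBy, mem_colonBy]
  refine ⟨fun h r hr => ?_, fun h r hr => ?_⟩
  · rw [mem_map_lequiv e, map_smul]; exact h r hr
  · have := h r hr; rw [mem_map_lequiv e, map_smul] at this; exact this

lemma map_lequiv_inf (e : M' ≃ₗ[R] M) (N P : Submodule R M') :
    Submodule.map e.toLinearMap (N ⊓ P)
      = Submodule.map e.toLinearMap N ⊓ Submodule.map e.toLinearMap P := by
  ext x
  simp only [Submodule.mem_inf, mem_map_lequiv e]

lemma map_lequiv_le_iff (e : M' ≃ₗ[R] M) {N P : Submodule R M'} :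
    Submodule.map e.toLinearMap N ≤ Submodule.map e.toLinearMap P ↔ N ≤ P :=
  Submodule.map_le_map_iff_of_injective e.injective N P

end Transport

section AlgebraGen

variable {R : Type*} {M : Type*} [CommRing R] [IsNoetherianRing R]
  [AddCommGroup M] [Module R M] [Module.Finite R M] (I : Ideal R)

/-- Eventually `𝔪ⁿM ∩ soc(M) = 0` (Artin-Rees). -/
lemma exists_pow_inf_socle_eq_bot :
    ∃ k, ∀ n ≥ k, (I ^ n • ⊤ : Submodule R M) ⊓ ((⊥ : Submodule R M).colonBy I) = ⊥ := by
  obtain ⟨t, π, hπ⟩ := Module.Finite.exists_fin' R M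
  let F := (Fin t → R) ⧸ LinearMap.ker π
  have : Module.Finite R F :=
    Module.Finite.of_surjective (LinearMap.ker π).mkQ (Submodule.mkQ_surjective _)
  let e : F ≃ₗ[R] M := LinearMap.quotKerEquivOfSurjective π hπ
  obtain ⟨k, hk⟩ := exists_pow_inf_socle_eq_bot_u (M := F) I
  refine ⟨k, fun n hn => ?_⟩
  have := hk n hn
  have h2 : Submodule.map e.toLinearMap ((I ^ n • ⊤ : Submodule R F) ⊓ (⊥ : Submodule R F).colonBy I)
      = Submodule.map e.toLinearMap ⊥ := by rw [this]
  rw [map_lequiv_inf, map_lequiv_colonBy, Submodule.map_bot, map_lequiv_pow_top] at h2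
  exact h2

/-- Uniform Artin-Rees bound for colon submodules. -/
lemma exists_colon_le :
    ∃ k, ∀ n ≥ k, ((I ^ (n+1) • ⊤ : Submodule R M).colonBy I)
      ≤ ((⊥ : Submodule R M).colonBy I) ⊔ (I ^ (n + 1 - k) • ⊤) := by
  obtain ⟨t, π, hπ⟩ := Module.Finite.exists_fin' R M
  let F := (Fin t → R) ⧸ LinearMap.ker π
  have : Module.Finite R F :=
    Module.Finite.of_surjective (LinearMap.ker π).mkQ (Submodule.mkQ_surjective _)
  let e : F ≃ₗ[R] M := LinearMap.quotKerEquivOfSurjective π hπ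
  obtain ⟨k, hk⟩ := exists_colon_le_u (M := F) I
  refine ⟨k, fun n hn => ?_⟩
  have := hk n hn
  have h2 : Submodule.map e.toLinearMap ((I ^ (n+1) • ⊤ : Submodule R F).colonBy I)
      ≤ Submodule.map e.toLinearMap (((⊥ : Submodule R F).colonBy I) ⊔ (I ^ (n + 1 - k) • ⊤)) :=
    (map_lequiv_le_iff e).mpr this
  rw [Submodule.map_sup, map_lequiv_colonBy, map_lequiv_colonBy, Submodule.map_bot,
    map_lequiv_pow_top, map_lequiv_pow_top] at h2
  exact h2

/-- Eventual vanishing of the graded socle. -/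
lemma exists_socle_vanish :
    ∃ n₀, ∀ i ≥ n₀, ((I ^ (i+2) • ⊤ : Submodule R M).colonBy I) ⊓ (I ^ i • ⊤)
      ≤ (I ^ (i+1) • ⊤ : Submodule R M) := by
  obtain ⟨t, π, hπ⟩ := Module.Finite.exists_fin' R M
  let F := (Fin t → R) ⧸ LinearMap.ker π
  have : Module.Finite R F :=
    Module.Finite.of_surjective (LinearMap.ker π).mkQ (Submodule.mkQ_surjective _)
  let e : F ≃ₗ[R] M := LinearMap.quotKerEquivOfSurjective π hπ
  obtain ⟨n₀, hn₀⟩ := exists_socle_vanish_u (M := F) I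
  refine ⟨n₀, fun i hi => ?_⟩
  have := hn₀ i hi
  have h2 : Submodule.map e.toLinearMap (((I ^ (i+2) • ⊤ : Submodule R F).colonBy I) ⊓ (I ^ i • ⊤))
      ≤ Submodule.map e.toLinearMap (I ^ (i+1) • ⊤ : Submodule R F) :=
    (map_lequiv_le_iff e).mpr this
  rw [map_lequiv_inf, map_lequiv_colonBy, map_lequiv_pow_top, map_lequiv_pow_top,
    map_lequiv_pow_top] at h2
  exact h2

/-- For large `n`, the colon `(𝔪^{n+1}M :_M 𝔪)` equals `soc(M) + 𝔪ⁿM`. -/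
lemma exists_colon_eq :
    ∃ n₁, ∀ n ≥ n₁, ((I ^ (n+1) • ⊤ : Submodule R M).colonBy I)
      = ((⊥ : Submodule R M).colonBy I) ⊔ (I ^ n • ⊤) := by
  obtain ⟨k2, hk2⟩ := exists_colon_le (M := M) I
  obtain ⟨n₀, hn₀⟩ := exists_socle_vanish (M := M) I
  set k := k2 + 1 with hkdef
  have hk : ∀ n ≥ k, ((I ^ (n+1) • ⊤ : Submodule R M).colonBy I)
      ≤ ((⊥ : Submodule R M).colonBy I) ⊔ (I ^ (n + 1 - k) • ⊤) := by
    intro n hn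
    refine le_trans (hk2 n (by omega)) (sup_le_sup_left (pow_top_le I (by omega)) _)
  refine ⟨n₀ + k + 1, fun n hn => ?_⟩
  have hjn : n + 1 - k ≤ n := by omega
  -- ascent
  have asc : ∀ d : ℕ, (n + 1 - k) + d ≤ n →
      ((I ^ (n+1) • ⊤ : Submodule R M).colonBy I)
        ≤ ((⊥ : Submodule R M).colonBy I) ⊔ (I ^ ((n + 1 - k) + d) • ⊤) := by
    intro d
    induction d with
    | zero => intro _; simpa using hk n (by omega)
    | succ d ih =>
      intro hd
      set i := (n + 1 - k) + d with hidef
      have hstep : ((I ^ (n+1) • ⊤ : Submodule R M).colonBy I)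
          ≤ ((⊥ : Submodule R M).colonBy I) ⊔ (I ^ i • ⊤) := ih (by omega)
      have hKK : ((I ^ (n+1) • ⊤ : Submodule R M).colonBy I)
          ≤ ((I ^ (i+2) • ⊤ : Submodule R M).colonBy I) :=
        colonBy_mono (pow_top_le I (by omega)) I
      have hmod : (((⊥ : Submodule R M).colonBy I) ⊔ (I ^ i • ⊤))
            ⊓ ((I ^ (i+2) • ⊤ : Submodule R M).colonBy I)
          = ((⊥ : Submodule R M).colonBy I)
            ⊔ ((I ^ i • ⊤) ⊓ ((I ^ (i+2) • ⊤ : Submodule R M).colonBy I)) :=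
        sup_inf_assoc_of_le _ (socle_le_colon I _)
      have h3 : ((I ^ (n+1) • ⊤ : Submodule R M).colonBy I)
          ≤ ((⊥ : Submodule R M).colonBy I)
            ⊔ ((I ^ i • ⊤) ⊓ ((I ^ (i+2) • ⊤ : Submodule R M).colonBy I)) := by
        rw [← hmod]
        exact le_inf hstep hKK
      refine le_trans h3 (sup_le_sup_left ?_ _)
      rw [inf_comm]
      exact hn₀ i (by omega)
  have := asc (n - (n + 1 - k)) (by omega)
  have hfix : (n + 1 - k) + (n - (n + 1 - k)) = n := by omega
  rw [hfix] at this
  refine le_antisymm this (sup_le (socle_le_colon I _) (pow_succ_top_le_colon I n))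

end AlgebraGen


/-- For the maximal ideal: if `dim M = 1` then `f⁰_𝔪(M) = e⁰_𝔪(M) + ℓ_R(0 :_M 𝔪)`. -/
theorem statement7 {R M : Type*} [CommRing R] [IsNoetherianRing R] [IsLocalRing R]
    [AddCommGroup M] [Module R M] [Module.Finite R M]
    (hdim : ringKrullDim (R ⧸ Module.annihilator R M) = 1)
    (P : Polynomial ℚ) (hPdeg : P.natDegree = 1) (c : ℚ)
    (hP : ∃ N : ℕ, ∀ n ≥ N, ∃ len : ℕ,
      moduleLength R (M ⧸ ((maximalIdeal R) ^ (n + 1) • ⊤ : Submodule R M)) = len ∧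
        (len : ℚ) = P.eval (n : ℚ))
    (hQ : ∃ N : ℕ, ∀ n ≥ N, ∃ len : ℕ,
      moduleLength R ↥(Submodule.map ((maximalIdeal R) ^ (n + 1) • ⊤ : Submodule R M).mkQ
        (((maximalIdeal R) ^ (n + 1) • ⊤ : Submodule R M).colonBy (maximalIdeal R))) = len ∧
        (len : ℚ) = c) :
    ∃ s : ℕ, moduleLength R ↥((⊥ : Submodule R M).colonBy (maximalIdeal R)) = s ∧
      c = P.leadingCoeff + s := by
  set I : Ideal R := maximalIdeal R with hI
  obtain ⟨N₁, h₁⟩ := hP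
  obtain ⟨N₂, h₂⟩ := hQ
  obtain ⟨kS, hkS⟩ := exists_pow_inf_socle_eq_bot (M := M) I
  obtain ⟨n₁, hn₁⟩ := exists_colon_eq (M := M) I
  set n : ℕ := N₁ + N₂ + kS + n₁ + 1 with hn
  set S : Submodule R M := (⊥ : Submodule R M).colonBy I with hS
  set A : Submodule R M := I ^ (n + 1) • ⊤ with hA
  set B : Submodule R M := I ^ n • ⊤ with hB
  -- basic inclusions
  have hAB : A ≤ B := pow_top_le I (by omega)
  have hAK : A ≤ A.colonBy I :=
    le_colonBy_of_smul_le
      (le_trans (le_of_eq (smul_pow_top I (n + 1))) (pow_top_le I (by omega)))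
  have hKeq : A.colonBy I = S ⊔ B := hn₁ n (by omega)
  have hSB : S ⊓ B = ⊥ := by
    rw [inf_comm]; exact hkS n (by omega)
  have hBK : B ≤ A.colonBy I := pow_succ_top_le_colon I n
  -- lengths from the hypotheses
  obtain ⟨l1, hl1, hl1q⟩ := h₁ n (by omega)
  obtain ⟨l0, hl0, hl0q⟩ := h₁ (n - 1) (by omega)
  obtain ⟨cl, hcl, hclq⟩ := h₂ n (by omega)
  rw [show n - 1 + 1 = n by omega] at hl0
  rw [moduleLength_quotient] at hl1 hl0
  rw [moduleLength_map_mkQ _ _ hAK] at hcl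
  -- length decompositions
  have E1 : elen A (⊤ : Submodule R M) = elen A B + elen B ⊤ := elen_add hAB le_top
  have E2 : elen A (A.colonBy I) = elen A B + elen B (S ⊔ B) := by
    rw [hKeq] at *
    exact elen_add hAB le_sup_right
  have E3 : elen (⊥ : Submodule R M) S = elen B (S ⊔ B) := elen_diamond S B hSB
  -- finiteness
  have hfin : elen A B + elen (⊥ : Submodule R M) S = (cl : ℕ∞) := by
    rw [E3, ← E2, hcl]
  have h1top : elen A B ≠ ⊤ :=
    ne_top_of_lt (lt_of_le_of_lt (le_trans le_self_add (le_of_eq hfin))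
      (WithTop.coe_lt_top cl))
  have h2top : elen (⊥ : Submodule R M) S ≠ ⊤ :=
    ne_top_of_lt (lt_of_le_of_lt (le_trans le_add_self (le_of_eq hfin))
      (WithTop.coe_lt_top cl))
  obtain ⟨xe, hxeE'⟩ := WithTop.ne_top_iff_exists.mp h1top
  obtain ⟨sn, hsnE'⟩ := WithTop.ne_top_iff_exists.mp h2top
  have hxeE : (xe : ℕ∞) = elen A B := by exact_mod_cast hxeE'
  have hsnE : (sn : ℕ∞) = elen (⊥ : Submodule R M) S := by exact_mod_cast hsnE'
  -- natural-number equations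
  have hnat1 : l1 = xe + l0 := by
    have : (l1 : ℕ∞) = (xe : ℕ∞) + (l0 : ℕ∞) := by
      rw [← hl1, E1, ← hxeE, hl0]
    exact_mod_cast this
  have hnat2 : cl = xe + sn := by
    have : (cl : ℕ∞) = (xe : ℕ∞) + (sn : ℕ∞) := by
      rw [← hfin, hxeE, hsnE]
    exact_mod_cast this
  refine ⟨sn, ?_, ?_⟩
  · rw [moduleLength_submodule]
    exact hsnE.symm
  · -- rational arithmetic
    have hPC := Polynomial.eq_X_add_C_of_natDegree_le_one (le_of_eq hPdeg)
    have hlead : P.leadingCoeff = P.coeff 1 := by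
      rw [Polynomial.leadingCoeff, hPdeg]
    have hcast : ((n - 1 : ℕ) : ℚ) = (n : ℚ) - 1 := by
      have h1n : (1 : ℕ) ≤ n := by omega
      push_cast [Nat.cast_sub h1n]
      ring
    have hdiff : P.eval (n : ℚ) - P.eval ((n : ℚ) - 1) = P.leadingCoeff := by
      conv_lhs => rw [hPC]
      rw [hlead]
      simp only [Polynomial.eval_add, Polynomial.eval_mul, Polynomial.eval_C, Polynomial.eval_X]
      ring
    have e1 : (l1 : ℚ) = (xe : ℚ) + (l0 : ℚ) := by exact_mod_cast hnat1
    have e2 : (cl : ℚ) = (xe : ℚ) + (sn : ℚ) := by exact_mod_cast hnat2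
    rw [hl1q, hl0q, hcast] at e1
    rw [hclq] at e2
    linarith [hdiff, e1, e2]
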